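/- Let G, G₁, G₂ be simple mixed graphs on the same vertex set Fin n (n ≥ 1) such that G = G₁ ⊕ G₂ is a factorization, i.e., E = E₁ + E₂ and A = A₁ + A₂ pointwise. Then (i) ν_{2n−1}(G) ≥ ν_{2n−1}(G₁) + ν_{2n−1}(G₂), and (ii) max{ν₁(G₁), ν₁(G₂)} ≤ ν₁(G) ≤ ν₁(G₁) + ν₁(G₂). -/

import Mathlib

set_option linter.unusedSectionVars false

open Matrix Finset Polynomial

variable {V : Type*} [Fintype V] [DecidableEq V]

/-- Undirected adjacency matrix of the mixed graph with edge-multiplicity function `E`: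
`(u,v)`-entry `E u v` for `u ≠ v`, and `(v,v)`-entry `2 * E v v`. -/
def Au (E : V → V → ℕ) : Matrix V V ℝ :=
  Matrix.of fun u v => if u = v then ((2 * E v v : ℕ) : ℝ) else ((E u v : ℕ) : ℝ)

/-- Arc matrix of the mixed graph with arc-multiplicity function `A`. -/
def Bm (A : V → V → ℕ) : Matrix V V ℝ := Matrix.of fun u v => ((A u v : ℕ) : ℝ)

/-- Undirected degree `d v`. -/
def dU (E : V → V → ℕ) (v : V) : ℕ :=
  (∑ u ∈ Finset.univ.filter (fun u => u ≠ v), E v u) + 2 * E v v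

/-- Out-degree `d⁺ v`. -/
def dOut (A : V → V → ℕ) (v : V) : ℕ := ∑ u, A v u

/-- In-degree `d⁻ v`. -/
def dIn (A : V → V → ℕ) (v : V) : ℕ := ∑ u, A u v

/-- Integrated adjacency matrix `𝓘(G) = [[Aᵤ, B], [Bᵀ, Aᵤ]]`. -/
def intAdj (E A : V → V → ℕ) : Matrix (V ⊕ V) (V ⊕ V) ℝ :=
  Matrix.fromBlocks (Au E) (Bm A) (Bm A)ᵀ (Au E)

/-- Integrated degree matrix `𝓘ᴰ(G)`. -/
def intDeg (E A : V → V → ℕ) : Matrix (V ⊕ V) (V ⊕ V) ℝ :=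
  Matrix.diagonal (Sum.elim (fun v => ((dU E v + dOut A v : ℕ) : ℝ))
    (fun v => ((dU E v + dIn A v : ℕ) : ℝ)))

/-- Integrated Laplacian matrix `𝓘ᴸ(G) = 𝓘ᴰ(G) - 𝓘(G)`. -/
def intLap (E A : V → V → ℕ) : Matrix (V ⊕ V) (V ⊕ V) ℝ := intDeg E A - intAdj E A

/-- Integrated signless Laplacian matrix `𝓘Q(G) = 𝓘ᴰ(G) + 𝓘(G)`. -/
def intQ (E A : V → V → ℕ) : Matrix (V ⊕ V) (V ⊕ V) ℝ := intDeg E A + intAdj E A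

/-- A mixed graph is simple: multiplicities at most 1, no loops, no directed loops. -/
def IsSimple (E A : V → V → ℕ) : Prop :=
  (∀ u v, E u v ≤ 1) ∧ (∀ u v, A u v ≤ 1) ∧ (∀ v, E v v = 0) ∧ (∀ v, A v v = 0)

/-- Number of edges (excluding loops): `e(G) = (1/2)·Σ_{u ≠ v} E u v`. -/
noncomputable def numEdges (E : V → V → ℕ) : ℝ :=
  (∑ u, ∑ v ∈ Finset.univ.filter (fun v => v ≠ u), (E u v : ℝ)) / 2

/-- Number of loops: `l(G) = Σ_v E v v`. -/
noncomputable def numLoops (E : V → V → ℕ) : ℝ := ∑ v, (E v v : ℝ)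

/-- Number of arcs (including directed loops): `a(G) = Σ_{u,v} A u v`. -/
noncomputable def numArcs (A : V → V → ℕ) : ℝ := ∑ u, ∑ v, (A u v : ℝ)

lemma intAdj_isHermitian (E A : V → V → ℕ) (hE : ∀ u v, E u v = E v u) :
    (intAdj E A).IsHermitian := by
  have hAu : (Au E)ᵀ = Au E := by
    ext u v
    by_cases h : u = v
    · subst h; rfl
    · simp [Au, Matrix.transpose_apply, h, Ne.symm h, hE u v]
  show (intAdj E A)ᴴ = intAdj E A
  rw [Matrix.conjTranspose_eq_transpose_of_trivial]
  unfold intAdj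
  rw [Matrix.fromBlocks_transpose, hAu, Matrix.transpose_transpose]

lemma intLap_isHermitian (E A : V → V → ℕ) (hE : ∀ u v, E u v = E v u) :
    (intLap E A).IsHermitian :=
  (Matrix.isHermitian_diagonal _).sub (intAdj_isHermitian E A hE)

lemma intQ_isHermitian (E A : V → V → ℕ) (hE : ∀ u v, E u v = E v u) :
    (intQ E A).IsHermitian :=
  (Matrix.isHermitian_diagonal _).add (intAdj_isHermitian E A hE)

/-- The non-increasing rearrangement of a finite tuple of reals. -/
noncomputable def sortDesc {N : ℕ} (f : Fin N → ℝ) : Fin N → ℝ :=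
  fun i => (f ∘ Tuple.sort f) i.rev

/-- The eigenvalues of the integrated Laplacian matrix `𝓘ᴸ(G)`, in non-increasing order:
`nuT E A hE i` is `ν_{i+1}(G)` (0-indexed). -/
noncomputable def nuT {n : ℕ} (E A : Fin n → Fin n → ℕ) (hE : ∀ u v, E u v = E v u) :
    Fin (n + n) → ℝ :=
  sortDesc (fun i => (intLap_isHermitian E A hE).eigenvalues (finSumFinEquiv.symm i))

/-- The eigenvalues of the integrated signless Laplacian matrix `𝓘Q(G)`, in non-increasing
order: `xiT E A hE i` is `ξ_{i+1}(G)` (0-indexed). -/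
noncomputable def xiT {n : ℕ} (E A : Fin n → Fin n → ℕ) (hE : ∀ u v, E u v = E v u) :
    Fin (n + n) → ℝ :=
  sortDesc (fun i => (intQ_isHermitian E A hE).eigenvalues (finSumFinEquiv.symm i))

/-- The eigenvalues of the integrated adjacency matrix `𝓘(G)`, in non-increasing order:
`lamT E A hE i` is `λ_{i+1}(G)` (0-indexed). -/
noncomputable def lamT {n : ℕ} (E A : Fin n → Fin n → ℕ) (hE : ∀ u v, E u v = E v u) :
    Fin (n + n) → ℝ :=
  sortDesc (fun i => (intAdj_isHermitian E A hE).eigenvalues (finSumFinEquiv.symm i))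


/-!
The integrated Laplacian is additive under factorization, `𝓘ᴸ(G) = 𝓘ᴸ(G₁) + 𝓘ᴸ(G₂)`, and each
summand is positive semidefinite with the all-ones vector `𝟙` in its kernel (nonpositive
off-diagonal entries, zero row sums). Everything then follows from Rayleigh quotients.
`ν₁` is the maximum of `xᵀ L x` over unit vectors `x`: evaluating at a top eigenvector of `G`
gives subadditivity, and at a top eigenvector of `Gᵢ` gives `ν₁(Gᵢ) ≤ ν₁(G)`. The second smallest
eigenvalue `ν_{2n-1}` bounds `xᵀ L x / xᵀ x` from below on `𝟙^⊥` (the bottom eigenvalue `0`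
belongs to `𝟙`), and is attained there by a vector in the span of the two bottom eigenvectors
of `G`; testing all three Laplacians on that vector gives (i).
-/

section SortDesc

variable {N : ℕ} (f : Fin N → ℝ)

-- `sortDesc f ⟨0, _⟩` is the largest entry of `f` and `sortDesc f ⟨N - 2, _⟩` the second smallest.

theorem le_sortDesc_zero (hN : 0 < N) (i : Fin N) : f i ≤ sortDesc f ⟨0, hN⟩ := by
  have h := Tuple.monotone_sort f (show (Tuple.sort f)⁻¹ i ≤ (⟨0, hN⟩ : Fin N).rev by
    simp only [Fin.le_def, Fin.val_rev]; omega)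
  simpa [sortDesc] using h

theorem exists_eq_sortDesc (k : Fin N) : ∃ i, f i = sortDesc f k :=
  ⟨Tuple.sort f k.rev, rfl⟩

theorem exists_forall_ne_sortDesc_le (hN : 2 ≤ N) :
    ∃ i₀, ∀ i, i ≠ i₀ → sortDesc f ⟨N - 2, by omega⟩ ≤ f i := by
  refine ⟨Tuple.sort f ⟨0, by omega⟩, fun i hi => ?_⟩
  have h := Tuple.monotone_sort f (show (⟨N - 2, by omega⟩ : Fin N).rev ≤ (Tuple.sort f)⁻¹ i by
    have : ((Tuple.sort f)⁻¹ i : ℕ) ≠ 0 := fun h0 =>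
      hi (Equiv.Perm.inv_eq_iff_eq.mp (Fin.ext h0))
    simp only [Fin.le_def, Fin.val_rev]; omega)
  simpa [sortDesc] using h

theorem exists_ne_le_sortDesc (hN : 2 ≤ N) :
    ∃ i j, i ≠ j ∧ f i ≤ sortDesc f ⟨N - 2, by omega⟩ ∧ f j ≤ sortDesc f ⟨N - 2, by omega⟩ := by
  have hrev : ((⟨N - 2, by omega⟩ : Fin N).rev : ℕ) = 1 := by
    simp only [Fin.val_rev]; omega
  refine ⟨Tuple.sort f ⟨0, by omega⟩, Tuple.sort f (⟨N - 2, by omega⟩ : Fin N).rev,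
    fun h => ?_, Tuple.monotone_sort f ?_, le_rfl⟩
  · have := congrArg Fin.val ((Tuple.sort f).injective h)
    simp only at this; omega
  · rw [Fin.le_def, hrev]; exact Nat.zero_le 1

end SortDesc

namespace Matrix.IsHermitian

variable {W : Type*} [Fintype W] [DecidableEq W] {M : Matrix W W ℝ} (hM : M.IsHermitian)

theorem eigenvectorBasis_dotProduct (k l : W) :
    ⇑(hM.eigenvectorBasis k) ⬝ᵥ ⇑(hM.eigenvectorBasis l) = if k = l then 1 else 0 := by
  rw [← orthonormal_iff_ite.mp hM.eigenvectorBasis.orthonormal k l,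
    EuclideanSpace.inner_eq_star_dotProduct, star_trivial, dotProduct_comm]

theorem dotProduct_eq_sum_eigenvectorBasis (u x : W → ℝ) :
    u ⬝ᵥ x = ∑ k, (⇑(hM.eigenvectorBasis k) ⬝ᵥ u) * (⇑(hM.eigenvectorBasis k) ⬝ᵥ x) := by
  have := hM.eigenvectorBasis.sum_inner_mul_inner (WithLp.toLp 2 u) (WithLp.toLp 2 x)
  simp only [EuclideanSpace.inner_eq_star_dotProduct, star_trivial] at this
  rw [dotProduct_comm, ← this]
  simp only [dotProduct_comm x]

theorem eigenvectorBasis_dotProduct_mulVec (k : W) (x : W → ℝ) :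
    ⇑(hM.eigenvectorBasis k) ⬝ᵥ (M *ᵥ x) =
      hM.eigenvalues k * (⇑(hM.eigenvectorBasis k) ⬝ᵥ x) := by
  have hMt : Mᵀ = M := by simpa [conjTranspose_eq_transpose_of_trivial] using hM.eq
  rw [dotProduct_mulVec, ← mulVec_transpose, hMt, mulVec_eigenvectorBasis, smul_dotProduct,
    smul_eq_mul]

theorem dotProduct_self_eq_sum (x : W → ℝ) :
    x ⬝ᵥ x = ∑ k, (⇑(hM.eigenvectorBasis k) ⬝ᵥ x) ^ 2 := by
  simp only [hM.dotProduct_eq_sum_eigenvectorBasis x x, sq]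

theorem dotProduct_mulVec_eq_sum (x : W → ℝ) :
    x ⬝ᵥ (M *ᵥ x) = ∑ k, hM.eigenvalues k * (⇑(hM.eigenvectorBasis k) ⬝ᵥ x) ^ 2 := by
  simp only [hM.dotProduct_eq_sum_eigenvectorBasis x, eigenvectorBasis_dotProduct_mulVec]
  exact Finset.sum_congr rfl fun k _ => by ring

theorem dotProduct_mulVec_le_of_eigenvalues_le {m : ℝ} {x : W → ℝ}
    (h : ∀ k, ⇑(hM.eigenvectorBasis k) ⬝ᵥ x ≠ 0 → hM.eigenvalues k ≤ m) :
    x ⬝ᵥ (M *ᵥ x) ≤ m * (x ⬝ᵥ x) := by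
  rw [hM.dotProduct_mulVec_eq_sum, hM.dotProduct_self_eq_sum, Finset.mul_sum]
  refine Finset.sum_le_sum fun k _ => ?_
  by_cases hk : ⇑(hM.eigenvectorBasis k) ⬝ᵥ x = 0
  · simp [hk]
  · exact mul_le_mul_of_nonneg_right (h k hk) (sq_nonneg _)

theorem le_dotProduct_mulVec_of_le_eigenvalues {m : ℝ} {x : W → ℝ}
    (h : ∀ k, ⇑(hM.eigenvectorBasis k) ⬝ᵥ x ≠ 0 → m ≤ hM.eigenvalues k) :
    m * (x ⬝ᵥ x) ≤ x ⬝ᵥ (M *ᵥ x) := by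
  rw [hM.dotProduct_mulVec_eq_sum, hM.dotProduct_self_eq_sum, Finset.mul_sum]
  refine Finset.sum_le_sum fun k _ => ?_
  by_cases hk : ⇑(hM.eigenvectorBasis k) ⬝ᵥ x = 0
  · simp [hk]
  · exact mul_le_mul_of_nonneg_right (h k hk) (sq_nonneg _)

theorem le_dotProduct_mulVec_of_dotProduct_eq_zero (hpos : M.PosSemidef) {u x : W → ℝ}
    (hu0 : u ≠ 0) (hu : M *ᵥ u = 0) (hx : u ⬝ᵥ x = 0) {ν : ℝ} {k₀ : W}
    (hν : ∀ k, k ≠ k₀ → ν ≤ hM.eigenvalues k) :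
    ν * (x ⬝ᵥ x) ≤ x ⬝ᵥ (M *ᵥ x) := by
  have hx_nonneg : 0 ≤ x ⬝ᵥ (M *ᵥ x) := by simpa using hpos.dotProduct_mulVec_nonneg x
  rcases le_or_gt ν 0 with hν0 | hν0
  · have : 0 ≤ x ⬝ᵥ x := by simpa using dotProduct_self_star_nonneg x
    nlinarith
  set a : W → ℝ := fun k => ⇑(hM.eigenvectorBasis k) ⬝ᵥ u
  -- The coefficients of `u` at eigenvalues `≥ ν > 0` vanish, so `u` is a nonzero multiple of
  -- the `k₀`-th eigenvector and `x ⊥ u` has no `k₀`-component.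
  have ha : ∀ k, k ≠ k₀ → a k = 0 := fun k hk => by
    have := hM.eigenvectorBasis_dotProduct_mulVec k u
    rw [hu, dotProduct_zero, eq_comm, mul_eq_zero] at this
    exact this.resolve_left (by linarith [hν k hk])
  have ha₀ : a k₀ ≠ 0 := fun h => hu0 <| dotProduct_self_eq_zero.mp <| by
    rw [hM.dotProduct_self_eq_sum]
    exact Finset.sum_eq_zero fun k _ => by
      rcases eq_or_ne k k₀ with rfl | hk
      · simp [a, h]
      · simp [a, ha k hk]
  have hx₀ : ⇑(hM.eigenvectorBasis k₀) ⬝ᵥ x = 0 := by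
    rw [hM.dotProduct_eq_sum_eigenvectorBasis,
      Finset.sum_eq_single k₀ (fun k _ hk => mul_eq_zero.2 (.inl (ha k hk)))
        (by simp)] at hx
    exact (mul_eq_zero.mp hx).resolve_left ha₀
  exact hM.le_dotProduct_mulVec_of_le_eigenvalues fun k hk =>
    hν k (by rintro rfl; exact hk hx₀)

theorem exists_dotProduct_eq_zero_dotProduct_mulVec_le (u : W → ℝ) {ν : ℝ} {i j : W}
    (hij : i ≠ j) (hi : hM.eigenvalues i ≤ ν) (hj : hM.eigenvalues j ≤ ν) :
    ∃ x, x ≠ 0 ∧ u ⬝ᵥ x = 0 ∧ x ⬝ᵥ (M *ᵥ x) ≤ ν * (x ⬝ᵥ x) := by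
  set v := fun k => ⇑(hM.eigenvectorBasis k)
  set a := v i ⬝ᵥ u
  set b := v j ⬝ᵥ u
  have hv : ∀ k, v k ≠ 0 := fun k h => by
    have : v k ⬝ᵥ v k = 1 := by simpa using hM.eigenvectorBasis_dotProduct k k
    simp [h] at this
  rcases eq_or_ne a 0 with ha | ha
  · refine ⟨v i, hv i, by rw [dotProduct_comm]; exact ha, ?_⟩
    refine hM.dotProduct_mulVec_le_of_eigenvalues_le fun k hk => ?_
    rw [hM.eigenvectorBasis_dotProduct] at hk
    rwa [(by simpa using hk : k = i)]
  · set x := b • v i - a • v j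
    have hcoeff : ∀ k, v k ⬝ᵥ x = b * (if k = i then 1 else 0) - a * (if k = j then 1 else 0) :=
      fun k => by simp [x, dotProduct_sub, dotProduct_smul, hM.eigenvectorBasis_dotProduct, v]
    refine ⟨x, fun hx => ?_, ?_, ?_⟩
    · have := hcoeff j
      simp [hx, hij.symm, ha] at this
    · rw [dotProduct_sub, dotProduct_smul, dotProduct_smul]
      simp only [smul_eq_mul, a, b, dotProduct_comm u]
      ring
    · refine hM.dotProduct_mulVec_le_of_eigenvalues_le fun k hk => ?_
      rw [hcoeff] at hk
      by_cases hki : k = i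
      · rwa [hki]
      · by_cases hkj : k = j
        · rwa [hkj]
        · simp [hki, hkj] at hk

section Sorted

variable {N : ℕ} (e : Fin N ≃ W)

theorem dotProduct_mulVec_le_sortDesc_zero (hN : 0 < N) (x : W → ℝ) :
    x ⬝ᵥ (M *ᵥ x) ≤ sortDesc (fun i => hM.eigenvalues (e i)) ⟨0, hN⟩ * (x ⬝ᵥ x) :=
  hM.dotProduct_mulVec_le_of_eigenvalues_le fun k _ => by
    simpa using le_sortDesc_zero (fun i => hM.eigenvalues (e i)) hN (e.symm k)

theorem exists_dotProduct_mulVec_eq_sortDesc (k : Fin N) :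
    ∃ x : W → ℝ, x ⬝ᵥ x = 1 ∧
      x ⬝ᵥ (M *ᵥ x) = sortDesc (fun i => hM.eigenvalues (e i)) k := by
  obtain ⟨i, hi⟩ := exists_eq_sortDesc (fun i => hM.eigenvalues (e i)) k
  have hself : ⇑(hM.eigenvectorBasis (e i)) ⬝ᵥ ⇑(hM.eigenvectorBasis (e i)) = 1 := by
    simpa using hM.eigenvectorBasis_dotProduct (e i) (e i)
  refine ⟨hM.eigenvectorBasis (e i), hself, ?_⟩
  rw [hM.eigenvectorBasis_dotProduct_mulVec, hself, mul_one, hi]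

theorem sortDesc_mul_le_dotProduct_mulVec (hN : 2 ≤ N) (hpos : M.PosSemidef) {u x : W → ℝ}
    (hu0 : u ≠ 0) (hu : M *ᵥ u = 0) (hx : u ⬝ᵥ x = 0) :
    sortDesc (fun i => hM.eigenvalues (e i)) ⟨N - 2, by omega⟩ * (x ⬝ᵥ x) ≤
      x ⬝ᵥ (M *ᵥ x) := by
  obtain ⟨i₀, hi₀⟩ := exists_forall_ne_sortDesc_le (fun i => hM.eigenvalues (e i)) hN
  refine hM.le_dotProduct_mulVec_of_dotProduct_eq_zero hpos hu0 hu hx (k₀ := e i₀) fun k hk => ?_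
  simpa using hi₀ (e.symm k) (by rintro rfl; simp at hk)

theorem exists_dotProduct_eq_zero_dotProduct_mulVec_le_sortDesc (hN : 2 ≤ N) (u : W → ℝ) :
    ∃ x, x ≠ 0 ∧ u ⬝ᵥ x = 0 ∧
      x ⬝ᵥ (M *ᵥ x) ≤ sortDesc (fun i => hM.eigenvalues (e i)) ⟨N - 2, by omega⟩ * (x ⬝ᵥ x) := by
  obtain ⟨i, j, hij, hi, hj⟩ := exists_ne_le_sortDesc (fun i => hM.eigenvalues (e i)) hN
  exact hM.exists_dotProduct_eq_zero_dotProduct_mulVec_le u (e.injective.ne hij) hi hj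

end Sorted

end Matrix.IsHermitian

theorem Matrix.posSemidef_of_offDiag_nonpos_of_mulVec_one_eq_zero {W : Type*} [Fintype W]
    {L : Matrix W W ℝ} (hL : L.IsHermitian) (hoff : ∀ i j, i ≠ j → L i j ≤ 0)
    (hrow : L *ᵥ 1 = 0) : L.PosSemidef := by
  have hsym : ∀ i j, L j i = L i j := fun i j => by
    simpa [conjTranspose_eq_transpose_of_trivial] using congrFun₂ hL.eq i j
  have hsum : ∀ i, ∑ j, L i j = 0 := fun i => by
    simpa [mulVec, dotProduct] using congrFun hrow i
  refine .of_dotProduct_mulVec_nonneg hL fun x => ?_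
  -- `xᵀ L x = ½ ∑ᵢⱼ (-Lᵢⱼ) (xᵢ - xⱼ)²`, since the rows and columns of `L` sum to zero
  have hrows : ∑ i, ∑ j, L i j * x i ^ 2 = 0 := by
    simp [← Finset.sum_mul, hsum]
  have hcols : ∑ i, ∑ j, L i j * x j ^ 2 = 0 := by
    rw [Finset.sum_comm]; simp [← Finset.sum_mul, hsym, hsum]
  have hdiff : 0 ≤ ∑ i, ∑ j, -L i j * (x i - x j) ^ 2 :=
    Finset.sum_nonneg fun i _ => Finset.sum_nonneg fun j _ => by
      rcases eq_or_ne i j with rfl | hij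
      · simp
      · exact mul_nonneg (neg_nonneg.mpr (hoff i j hij)) (sq_nonneg _)
  have hexpand : ∑ i, ∑ j, -L i j * (x i - x j) ^ 2 =
      2 * (x ⬝ᵥ (L *ᵥ x)) - ∑ i, ∑ j, L i j * x i ^ 2 - ∑ i, ∑ j, L i j * x j ^ 2 := by
    simp only [dotProduct, mulVec, Finset.mul_sum, ← Finset.sum_sub_distrib]
    exact Finset.sum_congr rfl fun i _ => Finset.sum_congr rfl fun j _ => by ring
  simp only [star_trivial]
  linarith

section IntegratedLaplacian

variable {V : Type*} [Fintype V] [DecidableEq V]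

theorem Au_add (E₁ E₂ : V → V → ℕ) : Au (E₁ + E₂) = Au E₁ + Au E₂ := by
  ext u v
  by_cases h : u = v
  · simp [Au, h]; ring
  · simp [Au, h]

theorem Bm_add (A₁ A₂ : V → V → ℕ) : Bm (A₁ + A₂) = Bm A₁ + Bm A₂ := by
  ext u v
  simp [Bm]

theorem intAdj_add (E₁ A₁ E₂ A₂ : V → V → ℕ) :
    intAdj (E₁ + E₂) (A₁ + A₂) = intAdj E₁ A₁ + intAdj E₂ A₂ := by
  rw [intAdj, intAdj, intAdj, Au_add, Bm_add, transpose_add, fromBlocks_add]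

theorem intDeg_add (E₁ A₁ E₂ A₂ : V → V → ℕ) :
    intDeg (E₁ + E₂) (A₁ + A₂) = intDeg E₁ A₁ + intDeg E₂ A₂ := by
  rw [intDeg, intDeg, intDeg, diagonal_add]
  congr 1
  ext (v | v) <;>
    simp [dU, dOut, dIn, Finset.sum_add_distrib] <;> ring

theorem intLap_add (E₁ A₁ E₂ A₂ : V → V → ℕ) :
    intLap (E₁ + E₂) (A₁ + A₂) = intLap E₁ A₁ + intLap E₂ A₂ := by
  rw [intLap, intLap, intLap, intDeg_add, intAdj_add]
  abel

theorem intAdj_nonneg (E A : V → V → ℕ) (i j : V ⊕ V) : 0 ≤ intAdj E A i j := by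
  rcases i with u | u <;> rcases j with v | v <;>
    simp only [intAdj, fromBlocks_apply₁₁, fromBlocks_apply₁₂, fromBlocks_apply₂₁,
      fromBlocks_apply₂₂, transpose_apply, Au, Bm, of_apply] <;>
    first | exact Nat.cast_nonneg _ | split_ifs <;> exact Nat.cast_nonneg _

theorem intAdj_mulVec_one (E A : V → V → ℕ) :
    intAdj E A *ᵥ 1 = intDeg E A *ᵥ 1 := by
  have hAu : ∀ v, ∑ u, Au E v u = (dU E v : ℝ) := fun v => by
    have hoff : ∀ u ∈ Finset.univ.erase v, Au E v u = E v u := fun u hu =>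
      if_neg (Finset.ne_of_mem_erase hu).symm
    rw [← Finset.add_sum_erase _ _ (Finset.mem_univ v), Finset.sum_congr rfl hoff, dU,
      Finset.filter_ne']
    simp [Au, add_comm]
  ext (v | v) <;> rw [intDeg, mulVec_diagonal] <;>
    simp [mulVec, dotProduct, intAdj, Fintype.sum_sum_type, hAu, Bm, dOut, dIn, add_comm]

theorem intLap_mulVec_one (E A : V → V → ℕ) : intLap E A *ᵥ 1 = 0 := by
  rw [intLap, sub_mulVec, intAdj_mulVec_one, sub_self]

theorem intLap_posSemidef (E A : V → V → ℕ) (hE : ∀ u v, E u v = E v u) :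
    (intLap E A).PosSemidef :=
  posSemidef_of_offDiag_nonpos_of_mulVec_one_eq_zero (intLap_isHermitian E A hE)
    (fun i j hij => by simpa [intLap, intDeg, hij] using intAdj_nonneg E A i j)
    (intLap_mulVec_one E A)

theorem dotProduct_intLap_mulVec_nonneg (E A : V → V → ℕ) (hE : ∀ u v, E u v = E v u)
    (x : V ⊕ V → ℝ) : 0 ≤ x ⬝ᵥ (intLap E A *ᵥ x) := by
  simpa using (intLap_posSemidef E A hE).dotProduct_mulVec_nonneg x

end IntegratedLaplacian

section SortedEigenvalues

variable {n : ℕ} (E A : Fin n → Fin n → ℕ) (hE : ∀ u v, E u v = E v u)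

theorem dotProduct_intLap_mulVec_le_nuT_zero (hn : 0 < n) (x : Fin n ⊕ Fin n → ℝ) :
    x ⬝ᵥ (intLap E A *ᵥ x) ≤ nuT E A hE ⟨0, Nat.add_pos_left hn n⟩ * (x ⬝ᵥ x) :=
  (intLap_isHermitian E A hE).dotProduct_mulVec_le_sortDesc_zero _ _ x

theorem exists_dotProduct_intLap_mulVec_eq_nuT (k : Fin (n + n)) :
    ∃ x : Fin n ⊕ Fin n → ℝ, x ⬝ᵥ x = 1 ∧ x ⬝ᵥ (intLap E A *ᵥ x) = nuT E A hE k :=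
  (intLap_isHermitian E A hE).exists_dotProduct_mulVec_eq_sortDesc _ k

theorem nuT_mul_le_dotProduct_intLap_mulVec (hn : 0 < n) {x : Fin n ⊕ Fin n → ℝ}
    (hx : 1 ⬝ᵥ x = 0) :
    nuT E A hE ⟨n + n - 2, Nat.sub_lt (Nat.add_pos_left hn n) two_pos⟩ * (x ⬝ᵥ x) ≤
      x ⬝ᵥ (intLap E A *ᵥ x) :=
  (intLap_isHermitian E A hE).sortDesc_mul_le_dotProduct_mulVec _ (by omega)
    (intLap_posSemidef E A hE) (fun h => by simpa using congrFun h (Sum.inl ⟨0, hn⟩))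
    (intLap_mulVec_one E A) hx

theorem exists_dotProduct_intLap_mulVec_le_nuT (hn : 0 < n) :
    ∃ x : Fin n ⊕ Fin n → ℝ, x ≠ 0 ∧ 1 ⬝ᵥ x = 0 ∧
      x ⬝ᵥ (intLap E A *ᵥ x) ≤
        nuT E A hE ⟨n + n - 2, Nat.sub_lt (Nat.add_pos_left hn n) two_pos⟩ * (x ⬝ᵥ x) :=
  (intLap_isHermitian E A hE).exists_dotProduct_eq_zero_dotProduct_mulVec_le_sortDesc _
    (by omega) 1

end SortedEigenvalues

/-- if `G = G₁ ⊕ G₂` is a factorization of a simple mixed graph then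
(i) `ν_{2n−1}(G) ≥ ν_{2n−1}(G₁) + ν_{2n−1}(G₂)` and
(ii) `max{ν₁(G₁), ν₁(G₂)} ≤ ν₁(G) ≤ ν₁(G₁) + ν₁(G₂)`. -/
theorem stmt11 (n : ℕ) (hn : 0 < n) (E A E₁ A₁ E₂ A₂ : Fin n → Fin n → ℕ)
    (hE : ∀ u v, E u v = E v u) (hE₁ : ∀ u v, E₁ u v = E₁ v u) (hE₂ : ∀ u v, E₂ u v = E₂ v u)
    (hEsum : ∀ u v, E u v = E₁ u v + E₂ u v) (hAsum : ∀ u v, A u v = A₁ u v + A₂ u v) :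
    (nuT E₁ A₁ hE₁ ⟨n + n - 2, by omega⟩ + nuT E₂ A₂ hE₂ ⟨n + n - 2, by omega⟩ ≤
        nuT E A hE ⟨n + n - 2, by omega⟩) ∧
    (max (nuT E₁ A₁ hE₁ ⟨0, by omega⟩) (nuT E₂ A₂ hE₂ ⟨0, by omega⟩) ≤
        nuT E A hE ⟨0, by omega⟩) ∧
    (nuT E A hE ⟨0, by omega⟩ ≤
        nuT E₁ A₁ hE₁ ⟨0, by omega⟩ + nuT E₂ A₂ hE₂ ⟨0, by omega⟩) := by
  have hsplit (x : Fin n ⊕ Fin n → ℝ) : x ⬝ᵥ (intLap E A *ᵥ x) =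
      x ⬝ᵥ (intLap E₁ A₁ *ᵥ x) + x ⬝ᵥ (intLap E₂ A₂ *ᵥ x) := by
    rw [show E = E₁ + E₂ from funext₂ hEsum, show A = A₁ + A₂ from funext₂ hAsum, intLap_add,
      add_mulVec, dotProduct_add]
  refine ⟨?_, max_le ?_ ?_, ?_⟩
  · obtain ⟨x, hx0, hx1, hx⟩ := exists_dotProduct_intLap_mulVec_le_nuT E A hE hn
    have h₁ := nuT_mul_le_dotProduct_intLap_mulVec E₁ A₁ hE₁ hn hx1
    have h₂ := nuT_mul_le_dotProduct_intLap_mulVec E₂ A₂ hE₂ hn hx1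
    have hxx : 0 < x ⬝ᵥ x := by simpa using dotProduct_star_self_pos_iff.mpr hx0
    refine le_of_mul_le_mul_right ?_ hxx
    linarith [hsplit x]
  · obtain ⟨x, hxx, hx⟩ := exists_dotProduct_intLap_mulVec_eq_nuT E₁ A₁ hE₁ ⟨0, by omega⟩
    have := dotProduct_intLap_mulVec_le_nuT_zero E A hE hn x
    rw [hxx, mul_one] at this
    linarith [hsplit x, dotProduct_intLap_mulVec_nonneg E₂ A₂ hE₂ x]
  · obtain ⟨x, hxx, hx⟩ := exists_dotProduct_intLap_mulVec_eq_nuT E₂ A₂ hE₂ ⟨0, by omega⟩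
    have := dotProduct_intLap_mulVec_le_nuT_zero E A hE hn x
    rw [hxx, mul_one] at this
    linarith [hsplit x, dotProduct_intLap_mulVec_nonneg E₁ A₁ hE₁ x]
  · obtain ⟨x, hxx, hx⟩ := exists_dotProduct_intLap_mulVec_eq_nuT E A hE ⟨0, by omega⟩
    have h₁ := dotProduct_intLap_mulVec_le_nuT_zero E₁ A₁ hE₁ hn x
    have h₂ := dotProduct_intLap_mulVec_le_nuT_zero E₂ A₂ hE₂ hn x
    rw [hxx, mul_one] at h₁ h₂
    linarith [hsplit x]
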